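/- Let G be a finite group. The prime ideals of the Burnside ring A(G) are exactly the sets P(H, p) = {x ∈ A(G) : φ_H(x) ≡ 0 mod p} for H ≤ G and p prime, together with P(H, 0) = {x ∈ A(G) : φ_H(x) = 0} for H ≤ G. In particular, every prime ideal of A(G) is of the form φ_H^{-1}(q) for some subgroup H and some prime ideal q of ℤ. -/
import Mathlib


set_option synthInstance.maxHeartbeats 1000000
set_option maxHeartbeats 1000000

/-- The vector of marks of the finite `G`-set given by a permutation representation
`ρ : G →* S_n` on `Fin n`: at a subgroup `H` it records the number of `H`-fixed points. -/
noncomputable def markVector (G : Type*) [Group G] (n : ℕ) (ρ : G →* Equiv.Perm (Fin n)) :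
    Subgroup G → ℤ :=
  fun H => (Nat.card {x : Fin n // ∀ h ∈ H, ρ h x = x} : ℤ)

/-- The Burnside ring `A(G)`, realized via the (injective) marks homomorphism as the subring
of `∏_{H ≤ G} ℤ` generated by the mark vectors of all finite `G`-sets. -/
noncomputable def BurnsideRing (G : Type*) [Group G] : Subring (Subgroup G → ℤ) :=
  Subring.closure {f | ∃ (n : ℕ) (ρ : G →* Equiv.Perm (Fin n)), f = markVector G n ρ}

/-- The mark homomorphism `φ_H : A(G) → ℤ` at the subgroup `H`. -/
noncomputable def markHom (G : Type*) [Group G] (H : Subgroup G) : BurnsideRing G →+* ℤ :=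
  ((Pi.evalRingHom (fun _ : Subgroup G => ℤ) H)).comp (BurnsideRing G).subtype

/-- the prime ideals of the Burnside ring `A(G)` of a finite group are exactly
the preimages `φ_H⁻¹(q)` of prime ideals `q ⊆ ℤ` under the mark homomorphisms, i.e. the
ideals `P(H,p) = {x : φ_H(x) ≡ 0 mod p}` and `P(H,0) = {x : φ_H(x) = 0}`. -/
theorem burnside_ring_prime_ideals
    {G : Type*} [Group G] [Fintype G] :
    (∀ P : Ideal (BurnsideRing G), P.IsPrime →
      ∃ (H : Subgroup G) (q : Ideal ℤ), q.IsPrime ∧ P = Ideal.comap (markHom G H) q) ∧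
    (∀ (H : Subgroup G) (q : Ideal ℤ), q.IsPrime →
      (Ideal.comap (markHom G H) q).IsPrime) := by
  have key : ∀ (x : BurnsideRing G) (H : Subgroup G),
      markHom G H x = (x : Subgroup G → ℤ) H := fun x H => rfl
  constructor
  · intro P hP
    have hfin : Finite (Subgroup G) :=
      Finite.of_injective (fun H : Subgroup G => (H : Set G)) SetLike.coe_injective
    have := Fintype.ofFinite (Subgroup G)
    -- the key element: for each x ∈ A(G), ∏_H (x - φ_H(x)) = 0
    have hprod : ∀ f : Subgroup G → BurnsideRing G,
        (∏ H : Subgroup G, (f H - ((markHom G H (f H) : ℤ) : BurnsideRing G))) = 0 := by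
      intro f
      ext1
      push_cast
      funext K
      rw [Finset.prod_apply]
      apply Finset.prod_eq_zero (Finset.mem_univ K)
      simp [key]
    -- find H with x - φ_H(x) ∈ P for all x
    have hH : ∃ H : Subgroup G, ∀ x : BurnsideRing G,
        x - ((markHom G H x : ℤ) : BurnsideRing G) ∈ P := by
      by_contra hc
      push_neg at hc
      choose f hf using hc
      have h0 : (∏ H : Subgroup G, (f H - ((markHom G H (f H) : ℤ) : BurnsideRing G))) ∈ P := by
        rw [hprod]; exact P.zero_mem
      rw [Ideal.IsPrime.prod_mem_iff] at h0
      obtain ⟨H, _, hmem⟩ := h0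
      exact hf H hmem
    obtain ⟨H, hH⟩ := hH
    refine ⟨H, Ideal.comap (Int.castRingHom (BurnsideRing G)) P, Ideal.IsPrime.comap _, ?_⟩
    ext x
    simp only [Ideal.mem_comap, Int.coe_castRingHom]
    constructor
    · intro hx
      have := P.sub_mem hx (hH x)
      simpa using P.neg_mem this
    · intro hx
      have := P.add_mem (hH x) hx
      simpa using this
  · intro H q hq
    exact Ideal.IsPrime.comap _
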